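/- If the degree-coloring index τ is a monotone function on the set of all multigraphs (i.e., τ(H) ≤ τ(G) whenever H is a sub-multigraph of G), then for every multigraph G, τ(G) = max(Δ(G), ω(G)). -/

import Mathlib

open Finset

/-- A multigraph: a finite vertex type, a finite edge type, an endpoints map
into unordered pairs of vertices, and no loops. -/
structure Multigraph where
  V : Type
  E : Type
  fintypeV : Fintype V
  decEqV : DecidableEq V
  fintypeE : Fintype E
  decEqE : DecidableEq E
  ends : E → Sym2 V
  noLoops : ∀ e, ¬ (ends e).IsDiag

attribute [instance] Multigraph.fintypeV Multigraph.decEqV Multigraph.fintypeE Multigraph.decEqE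

namespace Multigraph

open scoped Classical

variable (G : Multigraph)

/-- The degree of a vertex: the number of edges incident to it. -/
noncomputable def degree (x : G.V) : ℕ :=
  (Finset.univ.filter fun e => x ∈ G.ends e).card

/-- The maximum vertex degree Δ(G). -/
noncomputable def maxDegree : ℕ :=
  Finset.univ.sup fun x : G.V => G.degree x

/-- E(S): the edges with both endpoints in S. -/
noncomputable def edgesIn (S : Finset G.V) : Finset G.E :=
  Finset.univ.filter fun e => ∀ x ∈ G.ends e, x ∈ S

/-- Ceiling division of natural numbers: ⌈a / b⌉. -/
def ceilDiv (a b : ℕ) : ℕ := (a + b - 1) / b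

/-- The density ω(G) = max over vertex subsets S with |S| ≥ 2 of ⌈|E(S)| / ⌊|S|/2⌋⌉. -/
noncomputable def density : ℕ :=
  (Finset.univ.powerset.filter fun S : Finset G.V => 2 ≤ S.card).sup
    fun S => ceilDiv (G.edgesIn S).card (S.card / 2)

/-- A proper edge-coloring with colors `Fin c`: adjacent (distinct, sharing an endpoint)
edges receive distinct colors. -/
def IsProperEdgeColoring (c : ℕ) (col : G.E → Fin c) : Prop :=
  ∀ e f : G.E, e ≠ f → (∃ x : G.V, x ∈ G.ends e ∧ x ∈ G.ends f) → col e ≠ col f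

/-- The chromatic index χ'(G): the least number of colors in a proper edge-coloring. -/
noncomputable def chromaticIndex : ℕ :=
  sInf {c : ℕ | ∃ col : G.E → Fin c, G.IsProperEdgeColoring c col}

/-- μ(x): the set of colors used on the edges incident to x. -/
noncomputable def mu {c : ℕ} (col : G.E → Fin c) (x : G.V) : Finset (Fin c) :=
  (Finset.univ.filter fun e => x ∈ G.ends e).image col

/-- A degree-coloring with c colors: the degree condition and the cover condition. -/
def IsDegreeColoring (c : ℕ) (μ : G.V → Finset (Fin c)) : Prop :=
  (∀ x : G.V, (μ x).card = G.degree x) ∧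
  ∀ S : Finset G.V,
    (G.edgesIn S).card ≤ ∑ i : Fin c, (S.filter fun x => i ∈ μ x).card / 2

/-- The degree-coloring index τ(G): the least c admitting a degree-coloring. -/
noncomputable def tau : ℕ :=
  sInf {c : ℕ | ∃ μ : G.V → Finset (Fin c), G.IsDegreeColoring c μ}

/-- A matching: a set of pairwise non-adjacent edges. -/
def IsMatching (M : Finset G.E) : Prop :=
  ∀ e ∈ M, ∀ f ∈ M, e ≠ f → ∀ x : G.V, ¬ (x ∈ G.ends e ∧ x ∈ G.ends f)

/-- π(F): the maximum size of a matching consisting of edges from F. -/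
noncomputable def matchingNumber (F : Finset G.E) : ℕ :=
  (F.powerset.filter fun M => G.IsMatching M).sup Finset.card

/-- ω*(G) = max over nonempty F ⊆ E of ⌈|F| / π(F)⌉. -/
noncomputable def omegaStar : ℕ :=
  (Finset.univ.powerset.filter fun F : Finset G.E => F.Nonempty).sup
    fun F => ceilDiv F.card (G.matchingNumber F)

/-- H is a sub-multigraph of G. -/
def IsSub (H G : Multigraph) : Prop :=
  ∃ (f : H.V ↪ G.V) (g : H.E ↪ G.E),
    ∀ e : H.E, G.ends (g e) = (H.ends e).map f

/-- H is an induced sub-multigraph of G: additionally every edge of G with both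
endpoints in the image of the vertex embedding comes from H. -/
def IsInducedSub (H G : Multigraph) : Prop :=
  ∃ (f : H.V ↪ G.V) (g : H.E ↪ G.E),
    (∀ e : H.E, G.ends (g e) = (H.ends e).map f) ∧
    ∀ e' : G.E, (∀ x ∈ G.ends e', x ∈ Set.range f) → e' ∈ Set.range g

/-- Regularization: if G is regular with ω(G) ≤ Δ(G), R(G) = G; otherwise take two
disjoint copies of G and join each vertex x to its copy by
max(Δ(G), ω(G)) − deg_G(x) parallel edges. -/
noncomputable def regularize (G : Multigraph) : Multigraph :=
  if (∀ x : G.V, G.degree x = G.maxDegree) ∧ G.density ≤ G.maxDegree then G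
  else
    { V := G.V ⊕ G.V
      E := G.E ⊕ G.E ⊕ (Σ x : G.V, Fin (max G.maxDegree G.density - G.degree x))
      fintypeV := inferInstance
      decEqV := inferInstance
      fintypeE := inferInstance
      decEqE := inferInstance
      ends := fun e =>
        match e with
        | Sum.inl e => (G.ends e).map Sum.inl
        | Sum.inr (Sum.inl e) => (G.ends e).map Sum.inr
        | Sum.inr (Sum.inr p) => s(Sum.inl p.1, Sum.inr p.1)
      noLoops := by
        rintro (e | e | p)
        · rw [Sym2.isDiag_map Sum.inl_injective]; exact G.noLoops e
        · rw [Sym2.isDiag_map Sum.inr_injective]; exact G.noLoops e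
        · rw [Sym2.mk_isDiag_iff]; simp }

end Multigraph

/-!
Any degree-coloring with `c` colours has `Δ(G) ≤ c`, since `|μ(x)| = deg x`, and `ω(G) ≤ c`,
since each colour class contributes at most `⌊|S|/2⌋` to the cover condition for `S`.

Conversely, with `k = max Δ(G) ω(G)`, the regularization `R(G)` contains `G`, is `k`-regular and
satisfies `|E(S)| ≤ k ⌊|S|/2⌋` for every `S`; hence giving every vertex all `k` colours is a
degree-coloring of `R(G)`, and monotonicity yields `τ(G) ≤ τ(R(G)) ≤ k`. For `R(G)` built from two
copies of `G`, write `S = A ⊔ B`: edges of `G` inside `A` or `B` that meet `A ∩ B` are paid for by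
the degrees of the vertices of `A ∩ B`, and each such vertex also carries `k - deg x` parallel
edges, so it costs exactly `k`, while `A \ B` and `B \ A` are handled by the density bound.
-/

namespace Finset

variable {α : Type*} [DecidableEq α]

lemma subset_sdiff_or_inter_nonempty {P A : Finset α} (B : Finset α) (hA : P ⊆ A) :
    P ⊆ A \ B ∨ (P ∩ (A ∩ B)).Nonempty := by
  by_contra! h
  refine h.1 fun z hz => mem_sdiff.2 ⟨hA hz, fun hzB => ?_⟩
  exact (eq_empty_iff_forall_notMem.1 h.2 z) (mem_inter.2 ⟨hz, mem_inter.2 ⟨hA hz, hzB⟩⟩)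

lemma ite_subset_add_ite_subset_le {P A B : Finset α} (hP : 2 ≤ #P) :
    (if P ⊆ A then 1 else 0) + (if P ⊆ B then 1 else 0) ≤
      (if P ⊆ A \ B then 1 else 0) + (if P ⊆ B \ A then 1 else 0) + #(P ∩ (A ∩ B)) := by
  by_cases hA : P ⊆ A <;> by_cases hB : P ⊆ B <;> simp only [hA, hB, if_true, if_false]
  · rw [inter_eq_left.2 (subset_inter hA hB)]
    omega
  · rcases P.subset_sdiff_or_inter_nonempty B hA with h | h
    · simp only [h, if_true]; omega
    · have := h.card_pos; omega
  · rcases P.subset_sdiff_or_inter_nonempty A hB with h | h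
    · simp only [h, if_true]; omega
    · have := h.card_pos
      rw [inter_comm B A] at this
      omega
  · omega

end Finset

namespace Multigraph

variable (G : Multigraph)

lemma ceilDiv_le_iff {a b k : ℕ} (hb : 0 < b) : ceilDiv a b ≤ k ↔ a ≤ k * b := by
  rw [ceilDiv, Nat.div_le_iff_le_mul_add_pred hb, Nat.mul_comm]
  omega

lemma degree_le_maxDegree (x : G.V) : G.degree x ≤ G.maxDegree :=
  Finset.le_sup (mem_univ x)

lemma card_toFinset_ends (e : G.E) : #(G.ends e).toFinset = 2 :=
  Sym2.card_toFinset_of_not_isDiag _ (G.noLoops e)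

lemma mem_edgesIn_iff {S : Finset G.V} {e : G.E} :
    e ∈ G.edgesIn S ↔ (G.ends e).toFinset ⊆ S := by
  simp [edgesIn, subset_iff]

lemma card_edgesIn_eq_sum (S : Finset G.V) :
    #(G.edgesIn S) = ∑ e, if (G.ends e).toFinset ⊆ S then 1 else 0 := by
  rw [← card_filter]
  congr 1
  ext e
  simp [G.mem_edgesIn_iff]

lemma two_le_card_of_mem_edgesIn {S : Finset G.V} {e : G.E} (he : e ∈ G.edgesIn S) :
    2 ≤ #S :=
  G.card_toFinset_ends e ▸ card_le_card (G.mem_edgesIn_iff.1 he)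

lemma card_edgesIn_le_density_mul (S : Finset G.V) :
    #(G.edgesIn S) ≤ G.density * (#S / 2) := by
  by_cases hS : 2 ≤ #S
  · rw [← ceilDiv_le_iff (by omega)]
    exact Finset.le_sup (f := fun S => ceilDiv #(G.edgesIn S) (#S / 2)) (by simp [hS])
  · rw [card_eq_zero.2 (eq_empty_of_forall_notMem
      fun e he => hS (G.two_le_card_of_mem_edgesIn he))]
    exact Nat.zero_le _

lemma sum_degree_eq_sum_card_inter (T : Finset G.V) :
    ∑ x ∈ T, G.degree x = ∑ e, #((G.ends e).toFinset ∩ T) := by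
  convert sum_card_bipartiteAbove_eq_sum_card_bipartiteBelow (s := T) (t := univ)
    (r := fun x e => x ∈ G.ends e) using 2
  · rfl
  · congr 1
    ext
    simp [bipartiteBelow, and_comm]

lemma card_edgesIn_add_card_edgesIn_le (A B : Finset G.V) :
    #(G.edgesIn A) + #(G.edgesIn B) ≤
      #(G.edgesIn (A \ B)) + #(G.edgesIn (B \ A)) + ∑ x ∈ A ∩ B, G.degree x := by
  simp only [card_edgesIn_eq_sum, sum_degree_eq_sum_card_inter, ← sum_add_distrib]
  exact sum_le_sum fun e _ => ite_subset_add_ite_subset_le (G.card_toFinset_ends e).ge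

lemma maxDegree_le_of_isDegreeColoring {c : ℕ} {μ : G.V → Finset (Fin c)}
    (h : G.IsDegreeColoring c μ) : G.maxDegree ≤ c :=
  Finset.sup_le fun x _ => h.1 x ▸ (card_le_univ (μ x)).trans_eq (Fintype.card_fin c)

lemma density_le_of_isDegreeColoring {c : ℕ} {μ : G.V → Finset (Fin c)}
    (h : G.IsDegreeColoring c μ) : G.density ≤ c := by
  refine Finset.sup_le fun S hS => (ceilDiv_le_iff ?_).2 ?_
  · simp only [mem_filter] at hS
    omega
  calc #(G.edgesIn S) ≤ ∑ i : Fin c, #(S.filter (i ∈ μ ·)) / 2 := h.2 S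
    _ ≤ ∑ _i : Fin c, #S / 2 := sum_le_sum fun i _ => Nat.div_le_div_right (card_filter_le _ _)
    _ = c * (#S / 2) := by simp

lemma isDegreeColoring_incidentEdges :
    G.IsDegreeColoring (Fintype.card G.E)
      fun x => (univ.filter (x ∈ G.ends ·)).map (Fintype.equivFin G.E).toEmbedding := by
  refine ⟨fun x => card_map _, fun S => ?_⟩
  have two_le : ∀ e ∈ G.edgesIn S, 2 ≤ #(S.filter (· ∈ G.ends e)) := fun e he =>
    G.card_toFinset_ends e ▸ card_le_card fun z hz =>
      mem_filter.2 ⟨G.mem_edgesIn_iff.1 he hz, Sym2.mem_toFinset.1 hz⟩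
  calc #(G.edgesIn S) = ∑ e ∈ G.edgesIn S, 1 := card_eq_sum_ones _
    _ ≤ ∑ e ∈ G.edgesIn S, #(S.filter (· ∈ G.ends e)) / 2 :=
      sum_le_sum fun e he => by have := two_le e he; omega
    _ ≤ ∑ e, #(S.filter (· ∈ G.ends e)) / 2 := sum_le_sum_of_subset (subset_univ _)
    _ = _ := Fintype.sum_equiv (Fintype.equivFin G.E) _ _ fun e => by simp

lemma exists_isDegreeColoring_tau : ∃ μ : G.V → Finset (Fin G.tau), G.IsDegreeColoring G.tau μ :=
  Nat.sInf_mem (s := {c | ∃ μ : G.V → Finset (Fin c), G.IsDegreeColoring c μ})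
    ⟨_, _, G.isDegreeColoring_incidentEdges⟩

lemma max_maxDegree_density_le_tau : max G.maxDegree G.density ≤ G.tau :=
  let ⟨_, hμ⟩ := G.exists_isDegreeColoring_tau
  max_le (G.maxDegree_le_of_isDegreeColoring hμ) (G.density_le_of_isDegreeColoring hμ)

lemma tau_le_of_degree_eq {k : ℕ} (hdeg : ∀ x, G.degree x = k)
    (hcover : ∀ S, #(G.edgesIn S) ≤ k * (#S / 2)) : G.tau ≤ k :=
  Nat.sInf_le ⟨fun _ => univ, fun x => by simp [hdeg], fun S => by simpa using hcover S⟩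

noncomputable abbrev double (m : G.V → ℕ) : Multigraph where
  V := G.V ⊕ G.V
  E := G.E ⊕ G.E ⊕ (Σ x : G.V, Fin (m x))
  fintypeV := inferInstance
  decEqV := inferInstance
  fintypeE := inferInstance
  decEqE := inferInstance
  ends
    | .inl e => (G.ends e).map Sum.inl
    | .inr (.inl e) => (G.ends e).map Sum.inr
    | .inr (.inr p) => s(Sum.inl p.1, Sum.inr p.1)
  noLoops := by
    rintro (e | e | p)
    · rw [Sym2.isDiag_map Sum.inl_injective]; exact G.noLoops e
    · rw [Sym2.isDiag_map Sum.inr_injective]; exact G.noLoops e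
    · rw [Sym2.mk_isDiag_iff]; simp

lemma isSub_refl : G.IsSub G :=
  ⟨.refl _, .refl _, fun _ => (congrFun Sym2.map_id _).symm⟩

lemma isSub_double (m : G.V → ℕ) : G.IsSub (G.double m) :=
  ⟨⟨Sum.inl, Sum.inl_injective⟩, ⟨Sum.inl, Sum.inl_injective⟩, fun _ => rfl⟩

lemma degree_double_inl (m : G.V → ℕ) (x : G.V) :
    (G.double m).degree (.inl x) = G.degree x + m x := by
  simp only [degree, card_filter, Fintype.sum_sum_type, Fintype.sum_sigma]
  simp [Sym2.mem_map, Sym2.mem_iff]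

lemma degree_double_inr (m : G.V → ℕ) (x : G.V) :
    (G.double m).degree (.inr x) = G.degree x + m x := by
  simp only [degree, card_filter, Fintype.sum_sum_type, Fintype.sum_sigma]
  simp [Sym2.mem_map, Sym2.mem_iff]

lemma card_edgesIn_double (m : G.V → ℕ) (S : Finset (G.V ⊕ G.V)) :
    #((G.double m).edgesIn S) =
      #(G.edgesIn S.toLeft) + #(G.edgesIn S.toRight) + ∑ x ∈ S.toLeft ∩ S.toRight, m x := by
  rw [← univ_inter (S.toLeft ∩ S.toRight), ← sum_ite_mem]
  simp only [edgesIn, card_filter, Fintype.sum_sum_type, Fintype.sum_sigma]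
  simp [Sym2.mem_map, Sym2.mem_iff, add_assoc]

lemma card_edgesIn_double_le {m : G.V → ℕ} {k : ℕ} (hdeg : ∀ x, G.degree x + m x = k)
    (hk : G.density ≤ k) (S : Finset (G.V ⊕ G.V)) :
    #((G.double m).edgesIn S) ≤ k * (#S / 2) := by
  set L := S.toLeft
  set R := S.toRight
  have hcover : ∀ U, #(G.edgesIn U) ≤ k * (#U / 2) := fun U =>
    (G.card_edgesIn_le_density_mul U).trans (Nat.mul_le_mul_right _ hk)
  have hcard : #(L \ R) + #(R \ L) + 2 * #(L ∩ R) = #S := by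
    rw [← card_toLeft_add_card_toRight, ← card_sdiff_add_card_inter L R,
      ← card_sdiff_add_card_inter R L, inter_comm R L]
    ring
  calc #((G.double m).edgesIn S)
      = #(G.edgesIn L) + #(G.edgesIn R) + ∑ x ∈ L ∩ R, m x := G.card_edgesIn_double m S
    _ ≤ #(G.edgesIn (L \ R)) + #(G.edgesIn (R \ L)) + ∑ x ∈ L ∩ R, (G.degree x + m x) := by
      have := G.card_edgesIn_add_card_edgesIn_le L R
      rw [sum_add_distrib]
      omega
    _ ≤ k * (#(L \ R) / 2) + k * (#(R \ L) / 2) + k * #(L ∩ R) := by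
      rw [sum_congr rfl fun x _ => hdeg x, sum_const, smul_eq_mul, mul_comm _ k]
      gcongr <;> exact hcover _
    _ = k * (#(L \ R) / 2 + #(R \ L) / 2 + #(L ∩ R)) := by ring
    _ ≤ k * (#S / 2) := Nat.mul_le_mul_left k (by omega)

lemma tau_double_le {m : G.V → ℕ} {k : ℕ} (hdeg : ∀ x, G.degree x + m x = k)
    (hk : G.density ≤ k) : (G.double m).tau ≤ k := by
  refine (G.double m).tau_le_of_degree_eq (fun v => ?_) (G.card_edgesIn_double_le hdeg hk)
  rcases v with x | x
  · rw [degree_double_inl, hdeg]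
  · rw [degree_double_inr, hdeg]

lemma regularize_eq_double
    (h : ¬ ((∀ x : G.V, G.degree x = G.maxDegree) ∧ G.density ≤ G.maxDegree)) :
    G.regularize = G.double (fun x => max G.maxDegree G.density - G.degree x) := by
  rw [regularize, if_neg h]
  congr 1
  funext e
  rcases e with e | e | p <;> rfl

lemma isSub_regularize : G.IsSub G.regularize := by
  by_cases h : (∀ x : G.V, G.degree x = G.maxDegree) ∧ G.density ≤ G.maxDegree
  · rw [regularize, if_pos h]
    exact G.isSub_refl
  · rw [G.regularize_eq_double h]
    exact G.isSub_double _

lemma tau_regularize_le : G.regularize.tau ≤ max G.maxDegree G.density := by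
  by_cases h : (∀ x : G.V, G.degree x = G.maxDegree) ∧ G.density ≤ G.maxDegree
  · rw [regularize, if_pos h, max_eq_left h.2]
    exact G.tau_le_of_degree_eq h.1 fun S =>
      (G.card_edgesIn_le_density_mul S).trans (Nat.mul_le_mul_right _ h.2)
  · rw [G.regularize_eq_double h]
    refine G.tau_double_le (fun x => ?_) (le_max_right _ _)
    have := (G.degree_le_maxDegree x).trans (le_max_left _ G.density)
    omega

end Multigraph

/-- if τ is monotone on the set of all multigraphs, then for every
multigraph G, τ(G) = max(Δ(G), ω(G)). -/
theorem stmt_12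
    (hmono : ∀ G H : Multigraph, Multigraph.IsSub H G → H.tau ≤ G.tau) :
    ∀ G : Multigraph, G.tau = max G.maxDegree G.density := fun G =>
  ((hmono _ _ G.isSub_regularize).trans G.tau_regularize_le).antisymm
    G.max_maxDegree_density_le_tau
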